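/- arXiv:1301.7455 — 2 statements merged into one kernel-verified Lean document; each statement's English description precedes it below -/
import Mathlib

section
/- (Monotonicity of the campaign objective.) Let V be a finite set, w a weight function on V, s : V → ℝ with 0 ≤ s i ≤ 1 for all i, and let T ⊆ T' ⊆ V. If z is a T-equilibrium and z' is a T'-equilibrium for (w, s), then g(z) ≤ g(z'), where g(z) = Σ_{i ∈ V} z i. -/
/-!
Both bounds come from a discrete maximum principle: at a maximiser `m` of `u`, the weighted
average `∑ j, w m j * u j` is at most `(∑ j, w m j) * u m`, so an inequality
`u m * (1 + ∑ j, w m j) ≤ b + ∑ j, w m j * u j` forces `u m ≤ b`. Applied to `z` with `b = 1`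
(using `s ≤ 1`) it gives `z ≤ 1`; applied to `z - z'` with `b = 0` (the `s` terms cancel
outside `T'`, and `z - z' = z - 1 ≤ 0` on `T'`) it gives `z ≤ z'` pointwise.
-/

open Finset

theorem forall_le_of_le_or_mul_one_add_sum_le {V : Type*} [Fintype V] {w : V → V → ℝ}
    (hw : ∀ i j, 0 ≤ w i j) {u : V → ℝ} {b : ℝ}
    (hu : ∀ i, u i ≤ b ∨ u i * (1 + ∑ j, w i j) ≤ b + ∑ j, w i j * u j) (i : V) :
    u i ≤ b := by
  obtain ⟨m, -, hm⟩ := exists_max_image univ u ⟨i, mem_univ i⟩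
  have hmax : ∀ j, u j ≤ u m := fun j => hm j (mem_univ j)
  suffices u m ≤ b from (hmax i).trans this
  rcases hu m with hle | hsub
  · exact hle
  · have hmean : ∑ j, w m j * u j ≤ (∑ j, w m j) * u m := by
      rw [sum_mul]
      exact sum_le_sum fun j _ => mul_le_mul_of_nonneg_left (hmax j) (hw m j)
    linarith

section Equilibrium

variable {V : Type*} [Fintype V] {w : V → V → ℝ} {s : V → ℝ} {T T' : Finset V} {z z' : V → ℝ}

theorem equilibrium_le_one (hw : ∀ i j, 0 ≤ w i j) (hs : ∀ i, s i ≤ 1)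
    (hz1 : ∀ i ∈ T, z i = 1)
    (hz2 : ∀ i ∉ T, z i * (1 + ∑ j, w i j) = s i + ∑ j, w i j * z j) (i : V) :
    z i ≤ 1 :=
  forall_le_of_le_or_mul_one_add_sum_le hw (fun i => by
    by_cases hi : i ∈ T
    · exact .inl (hz1 i hi).le
    · exact .inr (by linarith [hz2 i hi, hs i])) i

theorem equilibrium_le_of_subset (hw : ∀ i j, 0 ≤ w i j) (hs : ∀ i, s i ≤ 1)
    (hTT' : T ⊆ T')
    (hz1 : ∀ i ∈ T, z i = 1)
    (hz2 : ∀ i ∉ T, z i * (1 + ∑ j, w i j) = s i + ∑ j, w i j * z j)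
    (hz'1 : ∀ i ∈ T', z' i = 1)
    (hz'2 : ∀ i ∉ T', z' i * (1 + ∑ j, w i j) = s i + ∑ j, w i j * z' j) (i : V) :
    z i ≤ z' i := by
  suffices z i - z' i ≤ 0 by linarith
  refine forall_le_of_le_or_mul_one_add_sum_le (u := fun i => z i - z' i) hw (fun i => ?_) i
  by_cases hi : i ∈ T'
  · exact .inl (by linarith [hz'1 i hi, equilibrium_le_one hw hs hz1 hz2 i])
  · refine .inr (le_of_eq ?_)
    simp only [mul_sub, sum_sub_distrib, zero_add]
    linarith [hz2 i fun h => hi (hTT' h), hz'2 i hi]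

end Equilibrium

theorem campaign_objective_monotone_general
    {V : Type*} [Fintype V] (w : V → V → ℝ)
    (hw : ∀ i j, 0 ≤ w i j)
    (s : V → ℝ) (hs : ∀ i, 0 ≤ s i ∧ s i ≤ 1)
    (T T' : Finset V) (hTT' : T ⊆ T')
    (z z' : V → ℝ)
    (hz1 : ∀ i ∈ T, z i = 1)
    (hz2 : ∀ i ∉ T, z i * (1 + ∑ j, w i j) = s i + ∑ j, w i j * z j)
    (hz'1 : ∀ i ∈ T', z' i = 1)
    (hz'2 : ∀ i ∉ T', z' i * (1 + ∑ j, w i j) = s i + ∑ j, w i j * z' j) :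
    ∑ i, z i ≤ ∑ i, z' i :=
  sum_le_sum fun i _ =>
    equilibrium_le_of_subset hw (fun i => (hs i).2) hTT' hz1 hz2 hz'1 hz'2 i

/-- monotonicity of the campaign objective g(z) = Σ_i z i. -/
theorem campaign_objective_monotone
    {V : Type*} [Fintype V] (w : V → V → ℝ)
    (hw : ∀ i j, 0 ≤ w i j) (hdiag : ∀ i, w i i = 0)
    (s : V → ℝ) (hs : ∀ i, 0 ≤ s i ∧ s i ≤ 1)
    (T T' : Finset V) (hTT' : T ⊆ T')
    (z z' : V → ℝ)
    (hz1 : ∀ i ∈ T, z i = 1)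
    (hz2 : ∀ i ∉ T, z i * (1 + ∑ j, w i j) = s i + ∑ j, w i j * z j)
    (hz'1 : ∀ i ∈ T', z' i = 1)
    (hz'2 : ∀ i ∉ T', z' i * (1 + ∑ j, w i j) = s i + ∑ j, w i j * z' j) :
    ∑ i, z i ≤ ∑ i, z' i :=
  campaign_objective_monotone_general w hw s hs T T' hTT' z z' hz1 hz2 hz'1 hz'2
end

section
/- (Vertex-cover reduction, converse direction.) Let V be a finite set and w a symmetric weight function on V taking values in {0, 1} with w i i = 0, such that W i = d for every i ∈ V for some d ≥ 1. Let s i = 0 for all i, let T ⊆ V, and let z be the T-equilibrium for (w, s). If T is not a vertex cover, i.e., there exist j, ℓ ∉ T with w j ℓ = 1, then z j < d / (d + 1), and consequently Σ_{i ∈ V} z i < |T| + (|V| − |T|) · d / (d + 1). -/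
/-! By a maximum principle an equilibrium with nonpositive internal opinions never exceeds `1`.
Hence every `i ∉ T` satisfies `z i (1 + W i) ≤ W i`, that is `z i ≤ d / (d + 1) < 1`. An edge
`j ℓ` outside `T` makes the neighbour `ℓ` pull `z j` strictly below this bound, and summing
gives the bound on the total opinion. -/

open Finset

def IsEquilibrium {V : Type*} [Fintype V] (w : V → V → ℝ) (s : V → ℝ) (T : Finset V)
    (z : V → ℝ) : Prop :=
  (∀ i ∈ T, z i = 1) ∧ ∀ i ∉ T, z i * (1 + ∑ j, w i j) = s i + ∑ j, w i j * z j

namespace IsEquilibrium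

variable {V : Type*} [Fintype V] {w : V → V → ℝ} {s : V → ℝ} {T : Finset V} {z : V → ℝ}

theorem le_one (hz : IsEquilibrium w s T z) (hw : ∀ i j, 0 ≤ w i j) (hs : ∀ i, s i ≤ 0)
    (k : V) : z k ≤ 1 := by
  obtain ⟨m, -, hm⟩ := exists_max_image univ z ⟨k, mem_univ k⟩
  replace hm : ∀ i, z i ≤ z m := fun i => hm i (mem_univ i)
  by_cases hmT : m ∈ T
  · exact hz.1 m hmT ▸ hm k
  · have hle : ∑ j, w m j * z j ≤ (∑ j, w m j) * z m := by
      rw [sum_mul]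
      exact sum_le_sum fun j _ => mul_le_mul_of_nonneg_left (hm j) (hw m j)
    linarith [hz.2 m hmT, hs m, hm k]

theorem sum_mul_le (hz : IsEquilibrium w s T z) (hw : ∀ i j, 0 ≤ w i j) (hs : ∀ i, s i ≤ 0)
    (i : V) : ∑ j, w i j * z j ≤ ∑ j, w i j :=
  sum_le_sum fun j _ => mul_le_of_le_one_right (hw i j) (hz.le_one hw hs j)

theorem sum_mul_lt (hz : IsEquilibrium w s T z) (hw : ∀ i j, 0 ≤ w i j) (hs : ∀ i, s i ≤ 0)
    {i k : V} (hik : 0 < w i k) (hk : z k < 1) : ∑ j, w i j * z j < ∑ j, w i j :=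
  sum_lt_sum (fun j _ => mul_le_of_le_one_right (hw i j) (hz.le_one hw hs j))
    ⟨k, mem_univ k, mul_lt_of_lt_one_right hik hk⟩

theorem le_div (hz : IsEquilibrium w s T z) (hw : ∀ i j, 0 ≤ w i j) (hs : ∀ i, s i ≤ 0)
    {i : V} (hi : i ∉ T) : z i ≤ (∑ j, w i j) / (∑ j, w i j + 1) := by
  have hpos : 0 < ∑ j, w i j + 1 := by positivity [sum_nonneg fun j (_ : j ∈ univ) => hw i j]
  rw [le_div_iff₀ hpos]
  linarith [hz.2 i hi, hs i, hz.sum_mul_le hw hs i]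

theorem lt_div (hz : IsEquilibrium w s T z) (hw : ∀ i j, 0 ≤ w i j) (hs : ∀ i, s i ≤ 0)
    {i k : V} (hi : i ∉ T) (hik : 0 < w i k) (hk : z k < 1) :
    z i < (∑ j, w i j) / (∑ j, w i j + 1) := by
  have hpos : 0 < ∑ j, w i j + 1 := by positivity [sum_nonneg fun j (_ : j ∈ univ) => hw i j]
  rw [lt_div_iff₀ hpos]
  linarith [hz.2 i hi, hs i, hz.sum_mul_lt hw hs hik hk]

end IsEquilibrium

theorem Finset.sum_lt_card_add_card_compl_mul {V : Type*} [Fintype V] (T : Finset V)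
    {z : V → ℝ} {c : ℝ} (hT : ∀ i ∈ T, z i = 1) (hle : ∀ i ∉ T, z i ≤ c) {j : V} (hj : j ∉ T)
    (hlt : z j < c) : ∑ i, z i < T.card + ((Fintype.card V : ℝ) - T.card) * c := by
  classical
  have hcompl : ∑ i ∈ Tᶜ, z i < ∑ _i ∈ Tᶜ, c :=
    sum_lt_sum (fun i hi => hle i (mem_compl.1 hi)) ⟨j, mem_compl.2 hj, hlt⟩
  rw [← sum_add_sum_compl T z, sum_congr rfl hT]
  simp only [sum_const, card_compl, nsmul_eq_mul, Nat.cast_sub (card_le_univ T), mul_one]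
    at hcompl ⊢
  linarith

theorem campaign_vertex_cover_converse_general
    {V : Type*} [Fintype V] (w : V → V → ℝ)
    (hval : ∀ i j, w i j = 0 ∨ w i j = 1)
    (d : ℕ) (hreg : ∀ i, ∑ j, w i j = (d : ℝ))
    (s : V → ℝ) (hs : ∀ i, s i = 0)
    (T : Finset V) (z : V → ℝ)
    (hz1 : ∀ i ∈ T, z i = 1)
    (hz2 : ∀ i ∉ T, z i * (1 + ∑ j, w i j) = s i + ∑ j, w i j * z j) :
    ∀ j ℓ : V, j ∉ T → ℓ ∉ T → w j ℓ = 1 →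
      z j < (d : ℝ) / (d + 1) ∧
      ∑ i, z i < (T.card : ℝ) + ((Fintype.card V : ℝ) - T.card) * ((d : ℝ) / (d + 1)) := by
  intro j ℓ hj hℓ hjℓ
  have hz : IsEquilibrium w s T z := ⟨hz1, hz2⟩
  have hw : ∀ i k, 0 ≤ w i k := fun i k => (hval i k).elim (·.ge) (· ▸ zero_le_one)
  have hs' : ∀ i, s i ≤ 0 := fun i => (hs i).le
  have hbound : ∀ i ∉ T, z i ≤ d / (d + 1) := fun i hi => by
    simpa only [hreg i] using hz.le_div hw hs' hi
  have hℓ : z ℓ < 1 :=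
    (hbound ℓ hℓ).trans_lt ((div_lt_one (by positivity)).2 (lt_add_one _))
  have hj' : z j < d / (d + 1) := by
    simpa only [hreg j] using hz.lt_div hw hs' hj (hjℓ ▸ one_pos) hℓ
  exact ⟨hj', sum_lt_card_add_card_compl_mul T hz1 hbound hj hj'⟩

/-- vertex-cover reduction, converse direction. -/
theorem campaign_vertex_cover_converse
    {V : Type*} [Fintype V] [DecidableEq V] (w : V → V → ℝ)
    (hsymm : ∀ i j, w i j = w j i) (hdiag : ∀ i, w i i = 0)
    (hval : ∀ i j, w i j = 0 ∨ w i j = 1)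
    (d : ℕ) (hd : 1 ≤ d) (hreg : ∀ i, ∑ j, w i j = (d : ℝ))
    (s : V → ℝ) (hs : ∀ i, s i = 0)
    (T : Finset V) (z : V → ℝ)
    (hz1 : ∀ i ∈ T, z i = 1)
    (hz2 : ∀ i ∉ T, z i * (1 + ∑ j, w i j) = s i + ∑ j, w i j * z j) :
    ∀ j ℓ : V, j ∉ T → ℓ ∉ T → w j ℓ = 1 →
      z j < (d : ℝ) / (d + 1) ∧
      ∑ i, z i < (T.card : ℝ) + ((Fintype.card V : ℝ) - T.card) * ((d : ℝ) / (d + 1)) :=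
  campaign_vertex_cover_converse_general w hval d hreg s hs T z hz1 hz2
end
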